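/- arXiv:2306.05862 — 2 statements merged into one kernel-verified Lean document; each statement's English description precedes it below -/
import Mathlib

section
/- Let P be a probability measure, δ ∈ (0,1), and Δ: Ω → ℝ, f: Ω → ℝ measurable. Then log P(f(ω) > Δ(ω)) ≤ max( log δ, sup over probability measures ν with D_KL(ν‖P) ≤ log(1/δ) and ν(f ≤ Δ) = 0 of inf over λ ≥ 0 of ( −D_KL(ν‖P) − λ E_ν[Δ − f] ) ). -/
open MeasureTheory

/-- KL divergence `D_KL(ν ‖ P) = E_ν[log (dν/dP)]` (as a real integral). -/
noncomputable def klReal {Ω : Type*} [MeasurableSpace Ω] (ν P : Measure Ω) : ℝ :=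
  ∫ ω, Real.log ((ν.rnDeriv P ω).toReal) ∂ν

open ProbabilityTheory InformationTheory

/-! If `p = P(f > Δ)` is at most `δ` there is nothing to prove. Otherwise the conditional
measure `P[|f > Δ]` is admissible: its density with respect to `P` is the constant `1/p` on the
event, so its divergence from `P` is `-log p ≤ log (1/δ)`. For every admissible `ν` the integral
of `Δ - f` is nonpositive, so the infimum over `λ ≥ 0` is attained at `λ = 0` and equals
`-D_KL(ν‖P)`; at `ν = P[|f > Δ]` this is `log p`. Gibbs' inequality bounds the family above,
which matters because `⨆` of an unbounded family of reals is `0`. -/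

lemma klReal_nonneg {Ω : Type*} [MeasurableSpace Ω] {ν P : Measure Ω}
    [IsProbabilityMeasure ν] [IsProbabilityMeasure P] (hνP : ν ≪ P) :
    0 ≤ klReal ν P := by
  by_cases hint : Integrable (llr ν P) ν
  · simpa [klReal, llr] using integral_llr_add_sub_measure_univ_nonneg hνP hint
  · exact (integral_undef hint).ge

lemma log_rnDeriv_cond_self {Ω : Type*} [MeasurableSpace Ω] {P : Measure Ω} [IsFiniteMeasure P]
    {s : Set Ω} (hs : MeasurableSet s) (hPs : P s ≠ 0) :
    (fun ω ↦ Real.log (P[|s].rnDeriv P ω).toReal) =ᵐ[P[|s]]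
      fun _ ↦ -Real.log (P s).toReal := by
  have hsmul := Measure.rnDeriv_smul_left_of_ne_top (P.restrict s) P
    (ENNReal.inv_ne_top.2 hPs)
  filter_upwards [cond_absolutelyContinuous.ae_le hsmul,
    cond_absolutelyContinuous.ae_le (Measure.rnDeriv_restrict_self P hs), ae_cond_mem hs]
    with ω hω hrestrict hωs
  rw [ProbabilityTheory.cond, hω, Pi.smul_apply, hrestrict, Set.indicator_of_mem hωs]
  simp [Real.log_inv]

lemma klReal_cond_self {Ω : Type*} [MeasurableSpace Ω] {P : Measure Ω} [IsFiniteMeasure P]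
    {s : Set Ω} (hs : MeasurableSet s) (hPs : P s ≠ 0) :
    klReal P[|s] P = -Real.log (P s).toReal := by
  have := cond_isProbabilityMeasure hPs
  rw [klReal, integral_congr_ae (log_rnDeriv_cond_self hs hPs), integral_const]
  simp

lemma iInf_sub_mul_of_nonpos (b c : ℝ) (hc : c ≤ 0) :
    ⨅ l : {l : ℝ // 0 ≤ l}, (b - l * c) = b := by
  have : Nonempty {l : ℝ // 0 ≤ l} := ⟨⟨0, le_rfl⟩⟩
  refine le_antisymm ?_ (le_ciInf fun l ↦ by nlinarith [l.2])
  refine (ciInf_le ⟨b, ?_⟩ ⟨0, le_rfl⟩).trans (by simp)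
  rintro _ ⟨l, rfl⟩
  nlinarith [l.2]

lemma integral_sub_nonpos_of_measure_setOf_le_eq_zero {Ω : Type*} [MeasurableSpace Ω]
    {ν : Measure Ω} {f g : Ω → ℝ} (h : ν {ω | f ω ≤ g ω} = 0) :
    ∫ ω, (g ω - f ω) ∂ν ≤ 0 := by
  refine integral_nonpos_of_ae ?_
  filter_upwards [measure_eq_zero_iff_ae_notMem.1 h] with ω hω
  simpa using (not_le.1 hω).le

theorem tail_bound_change_of_measure_general {Ω : Type*} [MeasurableSpace Ω]
    (P : Measure Ω) [IsProbabilityMeasure P] (δ : ℝ) (hδ : 0 < δ)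
    (Δ f : Ω → ℝ) (hΔ : Measurable Δ) (hf : Measurable f) :
    Real.log (P {ω | Δ ω < f ω}).toReal ≤
      max (Real.log δ)
        (⨆ ν : {ν : Measure Ω // IsProbabilityMeasure ν ∧ ν ≪ P ∧
            klReal ν P ≤ Real.log (1 / δ) ∧ (ν : Measure Ω) {ω | f ω ≤ Δ ω} = 0},
          ⨅ l : {l : ℝ // 0 ≤ l},
            (- klReal (ν : Measure Ω) P
              - (l : ℝ) * ∫ ω, (Δ ω - f ω) ∂(ν : Measure Ω))) := by
  set A := {ω | Δ ω < f ω}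
  have hA : MeasurableSet A := measurableSet_lt hΔ hf
  have hAc : {ω | f ω ≤ Δ ω} = Aᶜ := by ext; simp [A]
  rw [iSup_congr fun ν ↦ iInf_sub_mul_of_nonpos _ _
    (integral_sub_nonpos_of_measure_setOf_le_eq_zero ν.2.2.2.2)]
  rcases eq_or_ne (P A) 0 with hPA | hPA
  -- Lean's `log 0 = 0`, but no probability measure `ν ≪ P` lives on a `P`-null set, so the
  -- supremum is over an empty family and is `0` as well.
  · have : IsEmpty {ν : Measure Ω // IsProbabilityMeasure ν ∧ ν ≪ P ∧
        klReal ν P ≤ Real.log (1 / δ) ∧ ν {ω | f ω ≤ Δ ω} = 0} := by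
      refine ⟨fun ⟨ν, hν, hνP, _, hνAc⟩ ↦ ?_⟩
      have := measure_univ_le_add_compl (μ := ν) A
      rw [hνP hPA, ← hAc, hνAc, measure_univ] at this
      simp at this
    simp [hPA]
  rcases le_or_gt (P A).toReal δ with hle | hlt
  · exact le_max_of_le_left (Real.log_le_log (ENNReal.toReal_pos hPA (by finiteness)) hle)
  have := cond_isProbabilityMeasure (μ := P) hPA
  have hkl := klReal_cond_self hA hPA
  refine le_max_of_le_right (le_ciSup_of_le ⟨0, ?_⟩
    ⟨P[|A], this, cond_absolutelyContinuous, ?_, ?_⟩ (by rw [hkl, neg_neg]))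
  · rintro _ ⟨ν, rfl⟩
    have := ν.2.1
    simpa using klReal_nonneg ν.2.2.1
  · rw [hkl, one_div, Real.log_inv, neg_le_neg_iff]
    exact Real.log_le_log hδ hlt.le
  · rw [hAc, cond_apply hA, Set.inter_compl_self, measure_empty, mul_zero]

/-- tail bound via change of measure. The log-probability of the event
`{f > Δ}` is at most the max of `log δ` and the sup, over probability measures `ν ≪ P`
in the `log(1/δ)` KL-ball around `P` that are supported on `{f > Δ}`
(i.e. `ν(f ≤ Δ) = 0`), of the inf over `λ ≥ 0` of `-D_KL(ν‖P) - λ E_ν[Δ - f]`. -/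
theorem tail_bound_change_of_measure {Ω : Type*} [MeasurableSpace Ω]
    (P : Measure Ω) [IsProbabilityMeasure P] (δ : ℝ) (hδ : 0 < δ) (hδ1 : δ < 1)
    (Δ f : Ω → ℝ) (hΔ : Measurable Δ) (hf : Measurable f) :
    Real.log (P {ω | Δ ω < f ω}).toReal ≤
      max (Real.log δ)
        (⨆ ν : {ν : Measure Ω // IsProbabilityMeasure ν ∧ ν ≪ P ∧
            klReal ν P ≤ Real.log (1 / δ) ∧ (ν : Measure Ω) {ω | f ω ≤ Δ ω} = 0},
          ⨅ l : {l : ℝ // 0 ≤ l},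
            (- klReal (ν : Measure Ω) P
              - (l : ℝ) * ∫ ω, (Δ ω - f ω) ∂(ν : Measure Ω))) :=
  tail_bound_change_of_measure_general P δ hδ Δ f hΔ hf
end

section
/- Let q ∈ ℝ₊ and α, K > 0, and suppose a sequence of vectors satisfies ‖ξ_{r+1}‖ ≤ α/K² and, for j ≥ r+1, ‖δ_j‖² ≤ ‖ξ_j‖² + q²‖δ_{j−1}‖² and ‖ξ_{j+1}‖ ≤ α‖δ_j‖², with ‖δ_r‖² ≤ 1/K². If K² ≥ α²(2q²)^{j−r−1}/q² for all relevant j, then by induction for all r' ∈ [r+1, R]: ‖ξ_{r'}‖ ≤ α(2q²)^{r'−r−1}/K² and ‖δ_{r'−1}‖² ≤ (2q²)^{r'−r−1}/K². -/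
/-- the induction of the FSVM proof. With `xi j = ‖ξ_j‖` and
`del j = ‖δ_j‖` (nonnegative reals), the recurrences
`‖δ_j‖² ≤ ‖ξ_j‖² + q²‖δ_{j-1}‖²` and `‖ξ_{j+1}‖ ≤ α‖δ_j‖²`, the base cases
`‖ξ_{r+1}‖ ≤ α/K²`, `‖δ_r‖² ≤ 1/K²`, and the condition
`K² ≥ α²(2q²)^{j-r-1}/q²`, yield for all `r' ∈ [r+1, R]`:
`‖ξ_{r'}‖ ≤ α(2q²)^{r'-r-1}/K²` and `‖δ_{r'-1}‖² ≤ (2q²)^{r'-r-1}/K²`. -/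
theorem fsvm_induction (r R : ℕ) (hrR : r < R)
    (q α K : ℝ) (hq : 0 < q) (hα : 0 < α) (hK : 0 < K)
    (xi del : ℕ → ℝ) (hxi_nonneg : ∀ j, 0 ≤ xi j) (hdel_nonneg : ∀ j, 0 ≤ del j)
    (hbase_xi : xi (r + 1) ≤ α / K ^ 2)
    (hbase_del : del r ^ 2 ≤ 1 / K ^ 2)
    (hrec_del : ∀ j, r + 1 ≤ j → del j ^ 2 ≤ xi j ^ 2 + q ^ 2 * del (j - 1) ^ 2)
    (hrec_xi : ∀ j, r + 1 ≤ j → xi (j + 1) ≤ α * del j ^ 2)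
    (hKcond : ∀ j, r + 1 ≤ j → j ≤ R → α ^ 2 * (2 * q ^ 2) ^ (j - r - 1) / q ^ 2 ≤ K ^ 2) :
    ∀ r', r + 1 ≤ r' → r' ≤ R →
      xi r' ≤ α * (2 * q ^ 2) ^ (r' - r - 1) / K ^ 2 ∧
      del (r' - 1) ^ 2 ≤ (2 * q ^ 2) ^ (r' - r - 1) / K ^ 2 := by

  intro r' hr1
  induction r', hr1 using Nat.le_induction with
  | base =>
    intro _
    refine ⟨?_, ?_⟩
    · simpa using hbase_xi
    · simpa using hbase_del
  | succ n hn ih =>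
    intro hR
    have hnR : n ≤ R := le_of_lt (lt_of_lt_of_le (Nat.lt_succ_self n) hR)
    obtain ⟨ihx, ihd⟩ := ih hnR
    set m := n - r - 1 with hmdef
    set P : ℝ := (2 * q ^ 2) ^ m with hPdef
    have hP : 0 < P := by positivity
    have hK2 : 0 < K ^ 2 := by positivity
    have hcond := hKcond n hn hnR
    have hA : α ^ 2 * P ≤ q ^ 2 * K ^ 2 := by
      rw [div_le_iff₀ (by positivity)] at hcond
      linarith [hcond]
    have h1 : xi n ^ 2 ≤ (α * P / K ^ 2) ^ 2 :=
      pow_le_pow_left₀ (hxi_nonneg n) ihx 2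
    have h2 : (α * P / K ^ 2) ^ 2 ≤ q ^ 2 * P / K ^ 2 := by
      rw [div_pow, div_le_div_iff₀ (by positivity) hK2]
      nlinarith [hA, hP.le, hK2.le, mul_nonneg hP.le hK2.le]
    have h3 : q ^ 2 * del (n - 1) ^ 2 ≤ q ^ 2 * (P / K ^ 2) :=
      mul_le_mul_of_nonneg_left ihd (by positivity)
    have hdn : del n ^ 2 ≤ (2 * q ^ 2) ^ (m + 1) / K ^ 2 := by
      have hr := hrec_del n hn
      have key : (2 * q ^ 2) ^ (m + 1) / K ^ 2
          = q ^ 2 * P / K ^ 2 + q ^ 2 * (P / K ^ 2) := by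
        rw [pow_succ]; ring
      linarith [hr, h1, h2, h3]
    have hxn : xi (n + 1) ≤ α * ((2 * q ^ 2) ^ (m + 1) / K ^ 2) := by
      have := hrec_xi n hn
      calc xi (n + 1) ≤ α * del n ^ 2 := this
        _ ≤ α * ((2 * q ^ 2) ^ (m + 1) / K ^ 2) :=
          mul_le_mul_of_nonneg_left hdn hα.le
    have e1 : n + 1 - r - 1 = m + 1 := by omega
    have e2 : n + 1 - 1 = n := by omega
    rw [e1, e2]
    exact ⟨by rw [mul_div_assoc]; exact hxn, hdn⟩
end
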